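/- Let f(z) = 3.3957·(1−z)·exp(∫ᶻ¹ F(w) dw) where F(z) = −(z⁴ + 6z² + 4z + 1)/((z+1)(z²+1)²). Then f is strictly decreasing on the interval [z₀, 1], where z₀ = √(−2 + √5). -/

import Mathlib

/-! Writing `g z = ∫ w in z..1, F w`, the derivative of `f` is
`3.3957 · exp (g z) · ((1 - z) · (-F z) - 1)`, and clearing denominators gives
`(1 - z) · (-F z) - 1 = -2z (z⁴ + 4z² - 1) / ((z + 1)(z² + 1)²)`.
The quartic factor is `(z² + 2)² - 5`, which is positive exactly when `z > √(-2 + √5)`, so `f' < 0`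
on the interior of the interval. -/

noncomputable def F (z : ℝ) : ℝ :=
  -(z ^ 4 + 6 * z ^ 2 + 4 * z + 1) / ((z + 1) * (z ^ 2 + 1) ^ 2)

noncomputable def f (z : ℝ) : ℝ := 3.3957 * (1 - z) * Real.exp (∫ w in z..1, F w)

open Real Set

lemma continuousOn_F : ContinuousOn F (Ioi (-1)) := by
  refine ContinuousOn.div (by fun_prop) (by fun_prop) fun z hz => ?_
  have : 0 < z + 1 := by rw [mem_Ioi] at hz; linarith
  positivity

lemma hasDerivAt_integral_F {z : ℝ} (hz : -1 < z) :
    HasDerivAt (fun x => ∫ w in x..1, F w) (-F z) z := by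
  have hint : IntervalIntegrable F MeasureTheory.volume z 1 :=
    (continuousOn_F.mono fun x hx => (lt_min hz (by norm_num)).trans_le hx.1).intervalIntegrable
  exact intervalIntegral.integral_hasDerivAt_left hint
    (continuousOn_F.stronglyMeasurableAtFilter isOpen_Ioi z hz)
    (continuousOn_F.continuousAt (isOpen_Ioi.mem_nhds hz))

lemma one_sub_mul_neg_F_sub_one {z : ℝ} (hz : -1 < z) :
    (1 - z) * -F z - 1 = -(2 * z * (z ^ 4 + 4 * z ^ 2 - 1) / ((z + 1) * (z ^ 2 + 1) ^ 2)) := by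
  have : 0 < z + 1 := by linarith
  rw [F]
  field_simp
  ring

lemma hasDerivAt_f {z : ℝ} (hz : -1 < z) :
    HasDerivAt f (-(3.3957 * exp (∫ w in z..1, F w) *
      (2 * z * (z ^ 4 + 4 * z ^ 2 - 1) / ((z + 1) * (z ^ 2 + 1) ^ 2)))) z := by
  have h : HasDerivAt f (3.3957 * -1 * exp (∫ w in z..1, F w) +
      3.3957 * (1 - z) * (exp (∫ w in z..1, F w) * -F z)) z :=
    (((hasDerivAt_id' z).const_sub 1).const_mul 3.3957).mul (hasDerivAt_integral_F hz).exp
  rw [← mul_neg, ← one_sub_mul_neg_F_sub_one hz]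
  exact h.congr_deriv (by ring)

lemma quartic_pos_of_sqrt_lt {z : ℝ} (hz : √(-2 + √5) < z) : 0 < z ^ 4 + 4 * z ^ 2 - 1 := by
  have hz_sq : -2 + √5 < z ^ 2 := (sqrt_lt' ((sqrt_nonneg _).trans_lt hz)).mp hz
  have h5 : √5 ^ 2 = 5 := sq_sqrt (by norm_num)
  nlinarith [sqrt_nonneg 5]

theorem stmt_5 : StrictAntiOn f (Set.Icc (Real.sqrt (-2 + Real.sqrt 5)) 1) := by
  have hz₀ : -1 < √(-2 + √5) := by linarith [sqrt_nonneg (-2 + √5)]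
  refine strictAntiOn_of_deriv_neg (convex_Icc _ _)
    (fun z hz => (hasDerivAt_f (hz₀.trans_le hz.1)).continuousAt.continuousWithinAt)
    fun z hz => ?_
  rw [interior_Icc] at hz
  have hz_pos : 0 < z := (sqrt_nonneg _).trans_lt hz.1
  have hquartic := quartic_pos_of_sqrt_lt hz.1
  rw [(hasDerivAt_f (by linarith)).deriv, neg_lt_zero]
  positivity
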